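/- arXiv:2110.15908 — 3 statements merged into one kernel-verified Lean document; each statement's English description precedes it below -/
import Mathlib

section
/- Let X be a smooth extremal surface of degree q+1 in ℙ³(k) and let L and L' be two skew lines on X. Then the set of lines on X that meet both L and L' has cardinality exactly q²+1. -/
open Module

/-! Basic setup: `k` is an algebraically closed field of characteristic `p > 0`,
`q = p^e`.  We model ℙ³(k) via linear subspaces of `k⁴ = Fin 4 → k`:
points, lines and planes of ℙ³(k) are subspaces of dimension 1, 2 and 3
respectively.  A hypersurface cut out by a homogeneous form is recorded by its
affine cone in `k⁴`. -/

/-- The Frobenius form in 4 variables determined by a 4×4 matrix `A`: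
`∑ i j, A i j * x i ^ q * x j`, a homogeneous form of degree `q+1`. -/
def frobForm {k : Type*} [Field k] (q : ℕ) (A : Matrix (Fin 4) (Fin 4) k)
    (x : Fin 4 → k) : k :=
  ∑ i, ∑ j, A i j * x i ^ q * x j

/-- The affine cone in `k⁴` of the extremal surface in ℙ³(k) cut out by the
Frobenius form with matrix `A`; a point of ℙ³(k) lies on the surface iff its
homogeneous coordinate representatives lie in this set. -/
def extremalCone (k : Type*) [Field k] (q : ℕ) (A : Matrix (Fin 4) (Fin 4) k) :
    Set (Fin 4 → k) :=
  {x | frobForm q A x = 0}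

/-- A point of ℙ³(k): a 1-dimensional subspace of `k⁴`. -/
def IsPoint {k : Type*} [Field k] (c : Submodule k (Fin 4 → k)) : Prop :=
  finrank k c = 1

/-- A line of ℙ³(k): a 2-dimensional subspace of `k⁴`. -/
def IsLine {k : Type*} [Field k] (L : Submodule k (Fin 4 → k)) : Prop :=
  finrank k L = 2

/-- A plane of ℙ³(k): a 3-dimensional subspace of `k⁴`. -/
def IsPlane {k : Type*} [Field k] (H : Submodule k (Fin 4 → k)) : Prop :=
  finrank k H = 3

/-- `L` is a line lying on the surface with affine cone `X`. -/
def IsLineOn {k : Type*} [Field k] (X : Set (Fin 4 → k))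
    (L : Submodule k (Fin 4 → k)) : Prop :=
  IsLine L ∧ (L : Set (Fin 4 → k)) ⊆ X

/-- Two lines of ℙ³(k) meet iff the corresponding subspaces of `k⁴` intersect
nontrivially. -/
def MeetsLine {k : Type*} [Field k] (L M : Submodule k (Fin 4 → k)) : Prop :=
  L ⊓ M ≠ ⊥

/-- Two lines of ℙ³(k) are skew iff the corresponding subspaces of `k⁴`
intersect trivially. -/
def SkewLine {k : Type*} [Field k] (L M : Submodule k (Fin 4 → k)) : Prop :=
  L ⊓ M = ⊥

/-- `IsStarAt q X S c`: `S` is a star on the surface with affine cone `X`,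
centered at the point `c`, i.e. a set of `q+1` distinct lines on the surface
all passing through `c`. -/
def IsStarAt {k : Type*} [Field k] (q : ℕ) (X : Set (Fin 4 → k))
    (S : Set (Submodule k (Fin 4 → k))) (c : Submodule k (Fin 4 → k)) : Prop :=
  IsPoint c ∧ S.ncard = q + 1 ∧ ∀ L ∈ S, IsLineOn X L ∧ c ≤ L

/-- `S` is a star on the surface with affine cone `X`. -/
def IsStar {k : Type*} [Field k] (q : ℕ) (X : Set (Fin 4 → k))
    (S : Set (Submodule k (Fin 4 → k))) : Prop :=
  ∃ c, IsStarAt q X S c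

/-- `c` is a star point of the surface with affine cone `X`. -/
def IsStarPoint {k : Type*} [Field k] (q : ℕ) (X : Set (Fin 4 → k))
    (c : Submodule k (Fin 4 → k)) : Prop :=
  ∃ S, IsStarAt q X S c

/-- `H` is a star plane of the surface with affine cone `X`, centered at `c`:
the plane section `X ∩ H` is the union of a star centered at `c`. -/
def IsStarPlaneAt {k : Type*} [Field k] (q : ℕ) (X : Set (Fin 4 → k))
    (H c : Submodule k (Fin 4 → k)) : Prop :=
  IsPlane H ∧ ∃ S, IsStarAt q X S c ∧
    X ∩ (H : Set (Fin 4 → k)) = ⋃ L ∈ S, (L : Set (Fin 4 → k))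

/-- An element of `Aut(X)`: since every projective linear automorphism of
ℙ³(k) is represented by an invertible linear map of `k⁴` (uniquely up to
scalars, which act trivially on subspaces and preserve every cone), `g ∈
PGL(4,k)` with `g(X) = X` corresponds to a linear automorphism of `k⁴`
mapping the affine cone `X` onto itself. -/
def PreservesCone {k : Type*} [Field k] (X : Set (Fin 4 → k))
    (g : (Fin 4 → k) ≃ₗ[k] (Fin 4 → k)) : Prop :=
  (⇑g) '' X = X

/-!
Write the surface as `B x x = 0` for the `q`-Frobenius-sesquilinear form
`B x y = ∑ A i j x_i^q y_j`. As `q > 1`, a line lies on the surface iff `B` vanishes on it, so a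
transversal of `L` and `L'` is the join of a point `u ∈ L` with the unique point `W u ∈ L'` such
that `B u (W u) = 0`, and this join lies on the surface iff `B (W u) u = 0`. Since `W` is
`q`-semilinear, in coordinates `u = [s : t]` this condition is a binary form
`a s^(q²+1) + b s^(q²) t + c s t^(q²) + d t^(q²+1)` with `a d - b c` the product of (a Frobenius
twist of) the two Gram determinants of `B` on `L × L'` and `L' × L`, nonzero because `A` is
invertible. As `q² = 0` in `k`, such a form is separable, so it has exactly `q² + 1` zeros on `ℙ¹`.
-/

open Submodule

section LinearAlgebra

variable {k V : Type*} [Field k] [AddCommGroup V] [Module k V]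

theorem linearIndependent_pair_of_disjoint {L L' : Submodule k V} (h : Disjoint L L') {x y : V}
    (hx : x ∈ L) (hy : y ∈ L') (hx0 : x ≠ 0) (hy0 : y ≠ 0) : LinearIndependent k ![x, y] :=
  (LinearIndependent.pair_iff' hx0).2 fun a hxy =>
    hy0 (disjoint_def.1 h y (hxy ▸ L.smul_mem a hx) hy)

theorem finrank_span_pair {x y : V} (h : LinearIndependent k ![x, y]) :
    finrank k (span k {x, y}) = 2 := by
  have := finrank_span_eq_card h
  rwa [Matrix.range_cons_cons_empty, Fintype.card_fin] at this

theorem exists_eq_smul_of_mem_span_pair {L L' : Submodule k V} (h : Disjoint L L') {x y z : V}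
    (hx : x ∈ L) (hy : y ∈ L') (hz : z ∈ span k {x, y}) (hzL : z ∈ L) : ∃ a : k, z = a • x := by
  obtain ⟨a, b, rfl⟩ := mem_span_pair.1 hz
  have hb : b • y = 0 :=
    disjoint_def.1 h _ (by simpa using L.sub_mem hzL (L.smul_mem a hx)) (L'.smul_mem b hy)
  exact ⟨a, by rw [hb, add_zero]⟩

theorem eq_span_pair_of_finrank_eq_two {L L' M : Submodule k V} (h : Disjoint L L')
    (hM : finrank k M = 2) {x y : V} (hx : x ∈ M ⊓ L) (hy : y ∈ M ⊓ L') (hx0 : x ≠ 0)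
    (hy0 : y ≠ 0) : M = span k {x, y} := by
  have := Module.finite_of_finrank_eq_succ hM
  refine (eq_of_le_of_finrank_eq ?_ ?_).symm
  · simpa [span_le, Set.insert_subset_iff] using ⟨(mem_inf.1 hx).1, (mem_inf.1 hy).1⟩
  · rw [finrank_span_pair (linearIndependent_pair_of_disjoint h (mem_inf.1 hx).2
      (mem_inf.1 hy).2 hx0 hy0), hM]

theorem exists_linearIndependent_pair_span_eq {M : Submodule k V} (hM : finrank k M = 2) :
    ∃ x y : V, LinearIndependent k ![x, y] ∧ span k {x, y} = M := by
  have := Module.finite_of_finrank_eq_succ hM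
  let b := Module.finBasisOfFinrankEq k M hM
  have hb : LinearIndependent k ![(b 0 : V), b 1] := by
    rw [show ![(b 0 : V), b 1] = M.subtype ∘ b by ext i; fin_cases i <;> rfl]
    exact b.linearIndependent.map' M.subtype M.ker_subtype
  refine ⟨b 0, b 1, hb, eq_of_le_of_finrank_eq ?_ (by rw [finrank_span_pair hb, hM])⟩
  simp [span_le, Set.insert_subset_iff]

/-- The points of the projective line `ℙ(span {v₁, v₂})`, indexed by `Option k = k ∪ {∞}`. -/
def lineParam (v₁ v₂ : V) : Option k → V
  | none => v₁
  | some s => s • v₁ + v₂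

theorem lineParam_mem_span (v₁ v₂ : V) (o : Option k) : lineParam v₁ v₂ o ∈ span k {v₁, v₂} := by
  cases o with
  | none => exact subset_span (Set.mem_insert v₁ _)
  | some s => exact mem_span_pair.2 ⟨s, 1, by simp [lineParam]⟩

theorem lineParam_ne_zero {v₁ v₂ : V} (hv : LinearIndependent k ![v₁, v₂]) (o : Option k) :
    lineParam v₁ v₂ o ≠ 0 := by
  cases o with
  | none => simpa [lineParam] using hv.ne_zero 0
  | some s =>
    exact fun h =>
      one_ne_zero (LinearIndependent.pair_iff.1 hv s 1 (by simpa [lineParam] using h)).2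

theorem exists_eq_smul_lineParam {v₁ v₂ u : V} (hu : u ∈ span k {v₁, v₂}) :
    ∃ (c : k) (o : Option k), u = c • lineParam v₁ v₂ o := by
  obtain ⟨a, b, rfl⟩ := mem_span_pair.1 hu
  by_cases hb : b = 0
  · exact ⟨a, none, by simp [lineParam, hb]⟩
  · exact ⟨b, some (a / b), by simp [lineParam, smul_add, smul_smul, mul_div_cancel₀ _ hb]⟩

theorem eq_of_lineParam_eq_smul {v₁ v₂ : V} (hv : LinearIndependent k ![v₁, v₂])
    {o o' : Option k} {a : k} (h : lineParam v₁ v₂ o' = a • lineParam v₁ v₂ o) : o' = o := by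
  cases o with
  | none =>
    cases o' with
    | none => rfl
    | some s' =>
      have := hv.eq_of_pair (t := 1) (t' := 0) (by simpa [lineParam] using h)
      simp at this
  | some s =>
    cases o' with
    | none =>
      obtain ⟨h1, rfl⟩ := hv.eq_of_pair (s := 1) (t := 0)
        (by simpa [lineParam, smul_add, smul_smul] using h)
      simp at h1
    | some s' =>
      obtain ⟨rfl, rfl⟩ :=
        hv.eq_of_pair (t := 1) (by simpa [lineParam, smul_add, smul_smul] using h)
      simp

end LinearAlgebra

namespace LinearMap

variable {k V : Type*} [Field k] [AddCommGroup V] [Module k V] {σ : k →+* k}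
  (B : V →ₛₗ[σ] V →ₗ[k] k)

theorem apply_eq_zero_of_forall_apply_self_eq_zero (hσ : σ ≠ RingHom.id k) {M : Submodule k V}
    (hM : ∀ x ∈ M, B x x = 0) {x y : V} (hx : x ∈ M) (hy : y ∈ M) : B x y = 0 := by
  obtain ⟨t, ht⟩ : ∃ t, σ t ≠ t := by
    by_contra! h
    exact hσ (RingHom.ext h)
  have expand (c : k) : c * B x y + σ c * B y x = 0 := by
    simpa [hM x hx, hM y hy] using hM _ (M.add_mem hx (M.smul_mem c hy))
  have expand₁ : B x y + B y x = 0 := by simpa using expand 1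
  have hyx : B y x = 0 := by
    refine (mul_eq_zero.1 ?_).resolve_left (sub_ne_zero.2 ht)
    linear_combination expand t - t * expand₁
  linear_combination expand₁ - hyx

theorem apply_self_eq_zero_of_mem_span_pair {x y z : V} (hxx : B x x = 0) (hyy : B y y = 0)
    (hxy : B x y = 0) (hyx : B y x = 0) (hz : z ∈ span k {x, y}) : B z z = 0 := by
  obtain ⟨a, b, rfl⟩ := mem_span_pair.1 hz
  simp [hxx, hyy, hxy, hyx]

theorem det_ne_zero_of_separatingRight (hB : B.SeparatingRight) {L : Submodule k V}
    (hL : ∀ x ∈ L, ∀ y ∈ L, B x y = 0) {v₁ v₂ w₁ w₂ : V} (hv : LinearIndependent k ![v₁, v₂])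
    (hv₁ : v₁ ∈ L) (hv₂ : v₂ ∈ L) (htop : L ⊔ span k {w₁, w₂} = ⊤) :
    B w₁ v₁ * B w₂ v₂ - B w₁ v₂ * B w₂ v₁ ≠ 0 := by
  intro hdet
  obtain ⟨c, hc0, hc⟩ := Matrix.exists_mulVec_eq_zero_iff.2
    (by rwa [Matrix.det_fin_two_of] : (!![B w₁ v₁, B w₁ v₂; B w₂ v₁, B w₂ v₂]).det = 0)
  set y := c 0 • v₁ + c 1 • v₂ with hy
  have hw₁ : B w₁ y = 0 := by
    simpa [hy, Matrix.mulVec, dotProduct, Fin.sum_univ_two, mul_comm] using congrFun hc 0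
  have hw₂ : B w₂ y = 0 := by
    simpa [hy, Matrix.mulVec, dotProduct, Fin.sum_univ_two, mul_comm] using congrFun hc 1
  have hzero : y = 0 := by
    refine hB _ fun x => ?_
    obtain ⟨x₁, hx₁, x₂, hx₂, rfl⟩ := mem_sup.1 (htop ▸ mem_top : x ∈ L ⊔ span k {w₁, w₂})
    obtain ⟨a, b, rfl⟩ := mem_span_pair.1 hx₂
    have hx₁' := hL x₁ hx₁ y (L.add_mem (L.smul_mem (c 0) hv₁) (L.smul_mem (c 1) hv₂))
    simp only [map_add, add_apply, map_smulₛₗ₂, hx₁', hw₁, hw₂, smul_zero, add_zero]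
  obtain ⟨h0, h1⟩ := LinearIndependent.pair_iff.1 hv _ _ hzero
  exact hc0 (funext (Fin.forall_fin_two.2 ⟨h0, h1⟩))

/-- For `u` with `B u ≠ 0` on `span {w₁, w₂}`, this spans the kernel of `B u` there. -/
def orthoVec (w₁ w₂ : V) : V →ₛₗ[σ] V where
  toFun u := B u w₂ • w₁ - B u w₁ • w₂
  map_add' x y := by simp only [map_add, add_apply, add_smul]; abel
  map_smul' c x := by simp only [map_smulₛₗ₂, smul_eq_mul, mul_smul, smul_sub]

theorem orthoVec_apply (w₁ w₂ u : V) : B.orthoVec w₁ w₂ u = B u w₂ • w₁ - B u w₁ • w₂ := rfl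

theorem orthoVec_mem_span (w₁ w₂ u : V) : B.orthoVec w₁ w₂ u ∈ span k {w₁, w₂} :=
  mem_span_pair.2 ⟨B u w₂, -B u w₁, by simp [orthoVec_apply, sub_eq_add_neg]⟩

theorem apply_orthoVec (w₁ w₂ u : V) : B u (B.orthoVec w₁ w₂ u) = 0 := by
  simp [orthoVec_apply, mul_comm]

theorem orthoVec_apply_left (w₁ w₂ u y : V) :
    B (B.orthoVec w₁ w₂ u) y = σ (B u w₂) * B w₁ y - σ (B u w₁) * B w₂ y := by
  simp [orthoVec_apply]

theorem exists_eq_smul_orthoVec {w₁ w₂ u z : V} (hz : z ∈ span k {w₁, w₂}) (huz : B u z = 0)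
    (hu : B.orthoVec w₁ w₂ u ≠ 0) : ∃ μ : k, z = μ • B.orthoVec w₁ w₂ u := by
  obtain ⟨c₁, c₂, rfl⟩ := mem_span_pair.1 hz
  simp only [map_add, map_smul, smul_eq_mul] at huz
  rw [orthoVec_apply] at hu ⊢
  by_cases h₂ : B u w₂ = 0
  · have h₁ : B u w₁ ≠ 0 := fun h₁ => hu (by simp [h₁, h₂])
    have hc₁ : c₁ = 0 := by simpa [h₂, h₁] using huz
    exact ⟨-c₂ / B u w₁, by simp [hc₁, h₂, smul_smul, div_mul_cancel₀ _ h₁]⟩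
  · have hc₂ : c₂ = -(c₁ / B u w₂) * B u w₁ := by
      field_simp
      linear_combination huz
    refine ⟨c₁ / B u w₂, ?_⟩
    rw [hc₂, smul_sub, smul_smul, smul_smul, div_mul_cancel₀ _ h₂, neg_mul, neg_smul,
      sub_eq_add_neg]

theorem orthoVec_ne_zero {v₁ v₂ w₁ w₂ u : V} (hw : LinearIndependent k ![w₁, w₂])
    (hdet : B v₁ w₁ * B v₂ w₂ - B v₁ w₂ * B v₂ w₁ ≠ 0) (hu : u ∈ span k {v₁, v₂}) (hu0 : u ≠ 0) :
    B.orthoVec w₁ w₂ u ≠ 0 := by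
  obtain ⟨s, t, rfl⟩ := mem_span_pair.1 hu
  intro h
  rw [orthoVec_apply, sub_eq_add_neg, ← neg_smul] at h
  obtain ⟨h₂, h₁⟩ := LinearIndependent.pair_iff.1 hw _ _ h
  simp only [map_add, add_apply, map_smulₛₗ₂, smul_eq_mul, neg_eq_zero] at h₁ h₂
  have hs : (B v₁ w₁ * B v₂ w₂ - B v₁ w₂ * B v₂ w₁) * σ s = 0 := by
    linear_combination B v₂ w₂ * h₁ - B v₂ w₁ * h₂
  have ht : (B v₁ w₁ * B v₂ w₂ - B v₁ w₂ * B v₂ w₁) * σ t = 0 := by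
    linear_combination B v₁ w₁ * h₂ - B v₁ w₂ * h₁
  simp [hdet] at hs ht
  simp [hs, ht] at hu0

theorem orthoVec_det (v₁ v₂ w₁ w₂ : V) :
    B (B.orthoVec w₁ w₂ v₁) v₁ * B (B.orthoVec w₁ w₂ v₂) v₂
        - B (B.orthoVec w₁ w₂ v₁) v₂ * B (B.orthoVec w₁ w₂ v₂) v₁
      = σ (B v₁ w₁ * B v₂ w₂ - B v₁ w₂ * B v₂ w₁) * (B w₁ v₁ * B w₂ v₂ - B w₁ v₂ * B w₂ v₁) := by
  simp only [orthoVec_apply_left, map_sub, map_mul]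
  ring

theorem apply_orthoVec_lineParam (v₁ v₂ w₁ w₂ : V) (s : k) :
    B (B.orthoVec w₁ w₂ (lineParam v₁ v₂ (some s))) (lineParam v₁ v₂ (some s))
      = σ (σ s) * s * B (B.orthoVec w₁ w₂ v₁) v₁ + σ (σ s) * B (B.orthoVec w₁ w₂ v₁) v₂
        + s * B (B.orthoVec w₁ w₂ v₂) v₁ + B (B.orthoVec w₁ w₂ v₂) v₂ := by
  simp only [lineParam, map_add, map_smulₛₗ, add_apply, smul_apply, smul_eq_mul,
    RingHom.id_apply]
  ring

def transversals (L L' : Submodule k V) : Set (Submodule k V) :=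
  {M | finrank k M = 2 ∧ (∀ x ∈ M, B x x = 0) ∧ M ⊓ L ≠ ⊥ ∧ M ⊓ L' ≠ ⊥}

def orthoLine (v₁ v₂ w₁ w₂ : V) (o : Option k) : Submodule k V :=
  span k {lineParam v₁ v₂ o, B.orthoVec w₁ w₂ (lineParam v₁ v₂ o)}

variable {v₁ v₂ w₁ w₂ : V}

theorem orthoLine_mem_transversals (hv : LinearIndependent k ![v₁, v₂])
    (hdisj : Disjoint (span k {v₁, v₂}) (span k {w₁, w₂}))
    (hL : ∀ x ∈ span k {v₁, v₂}, B x x = 0) (hL' : ∀ x ∈ span k {w₁, w₂}, B x x = 0)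
    (hW : ∀ u ∈ span k {v₁, v₂}, u ≠ 0 → B.orthoVec w₁ w₂ u ≠ 0) {o : Option k}
    (ho : B (B.orthoVec w₁ w₂ (lineParam v₁ v₂ o)) (lineParam v₁ v₂ o) = 0) :
    B.orthoLine v₁ v₂ w₁ w₂ o ∈ B.transversals (span k {v₁, v₂}) (span k {w₁, w₂}) := by
  have hu := lineParam_mem_span v₁ v₂ o
  have hu0 := lineParam_ne_zero hv o
  have hWu := B.orthoVec_mem_span w₁ w₂ (lineParam v₁ v₂ o)
  have hWu0 := hW _ hu hu0
  refine ⟨finrank_span_pair (linearIndependent_pair_of_disjoint hdisj hu hWu hu0 hWu0),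
    fun x hx => B.apply_self_eq_zero_of_mem_span_pair (hL _ hu) (hL' _ hWu)
      (B.apply_orthoVec w₁ w₂ _) ho hx,
    (Submodule.ne_bot_iff _).2 ⟨_, mem_inf.2 ⟨subset_span (by simp), hu⟩, hu0⟩,
    (Submodule.ne_bot_iff _).2 ⟨_, mem_inf.2 ⟨subset_span (by simp), hWu⟩, hWu0⟩⟩

theorem exists_orthoLine_eq_of_mem_transversals (hσ : σ ≠ RingHom.id k)
    (hdisj : Disjoint (span k {v₁, v₂}) (span k {w₁, w₂}))
    (hW : ∀ u ∈ span k {v₁, v₂}, u ≠ 0 → B.orthoVec w₁ w₂ u ≠ 0) {M : Submodule k V}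
    (hM : M ∈ B.transversals (span k {v₁, v₂}) (span k {w₁, w₂})) :
    ∃ o : Option k, B (B.orthoVec w₁ w₂ (lineParam v₁ v₂ o)) (lineParam v₁ v₂ o) = 0 ∧
      B.orthoLine v₁ v₂ w₁ w₂ o = M := by
  obtain ⟨hM2, hMB, hML, hML'⟩ := hM
  obtain ⟨x, hx, hx0⟩ := (Submodule.ne_bot_iff _).1 hML
  obtain ⟨y, hy, hy0⟩ := (Submodule.ne_bot_iff _).1 hML'
  rw [eq_span_pair_of_finrank_eq_two hdisj hM2 hx hy hx0 hy0]
  obtain ⟨hxM, hxL⟩ := mem_inf.1 hx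
  obtain ⟨hyM, hyL'⟩ := mem_inf.1 hy
  have hxy := B.apply_eq_zero_of_forall_apply_self_eq_zero hσ hMB hxM hyM
  have hyx := B.apply_eq_zero_of_forall_apply_self_eq_zero hσ hMB hyM hxM
  obtain ⟨μ, rfl⟩ := B.exists_eq_smul_orthoVec hyL' hxy (hW x hxL hx0)
  obtain ⟨c, o, rfl⟩ := exists_eq_smul_lineParam hxL
  have hc : c ≠ 0 := by rintro rfl; simp at hx0
  have hμ : μ ≠ 0 := by rintro rfl; simp at hy0
  refine ⟨o, by simpa [hc, hμ] using hyx, ?_⟩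
  rw [orthoLine, map_smulₛₗ, smul_smul, span_insert, span_insert,
    span_singleton_smul_eq (IsUnit.mk0 _ hc),
    span_singleton_smul_eq (IsUnit.mk0 _ (mul_ne_zero hμ ((map_ne_zero σ).2 hc)))]

theorem transversals_eq_image_orthoLine (hσ : σ ≠ RingHom.id k)
    (hv : LinearIndependent k ![v₁, v₂]) (hdisj : Disjoint (span k {v₁, v₂}) (span k {w₁, w₂}))
    (hL : ∀ x ∈ span k {v₁, v₂}, B x x = 0) (hL' : ∀ x ∈ span k {w₁, w₂}, B x x = 0)
    (hW : ∀ u ∈ span k {v₁, v₂}, u ≠ 0 → B.orthoVec w₁ w₂ u ≠ 0) :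
    B.transversals (span k {v₁, v₂}) (span k {w₁, w₂}) = B.orthoLine v₁ v₂ w₁ w₂ ''
      {o | B (B.orthoVec w₁ w₂ (lineParam v₁ v₂ o)) (lineParam v₁ v₂ o) = 0} := by
  ext M
  refine ⟨fun hM => B.exists_orthoLine_eq_of_mem_transversals hσ hdisj hW hM, ?_⟩
  rintro ⟨o, ho, rfl⟩
  exact B.orthoLine_mem_transversals hv hdisj hL hL' hW ho

theorem orthoLine_injective (hv : LinearIndependent k ![v₁, v₂])
    (hdisj : Disjoint (span k {v₁, v₂}) (span k {w₁, w₂})) :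
    Function.Injective (B.orthoLine v₁ v₂ w₁ w₂) := by
  intro o o' h
  have hmem := (congrArg (lineParam v₁ v₂ o' ∈ ·) h).mpr (subset_span (Set.mem_insert _ _))
  obtain ⟨a, ha⟩ := exists_eq_smul_of_mem_span_pair hdisj (lineParam_mem_span v₁ v₂ o)
    (B.orthoVec_mem_span w₁ w₂ _) hmem (lineParam_mem_span v₁ v₂ o')
  exact (eq_of_lineParam_eq_smul hv ha).symm

end LinearMap

section RootCount

open Polynomial

variable {k : Type*} [Field k]

theorem ncard_setOf_isRoot_of_separable [IsAlgClosed k] {f : k[X]} (hf : f.Separable) :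
    {x | f.IsRoot x}.ncard = f.natDegree := by
  classical
  have : {x | f.IsRoot x} = f.roots.toFinset := by
    ext x
    simp [mem_roots hf.ne_zero]
  rw [this, Set.ncard_coe_finset, Multiset.toFinset_card_of_nodup (nodup_roots hf),
    IsAlgClosed.card_roots_eq_natDegree]

theorem separable_of_det_ne_zero {n : ℕ} (hn : (n : k) = 0) {a b c d : k}
    (hdet : a * d - b * c ≠ 0) : (C a * X ^ (n + 1) + C b * X ^ n + C c * X + C d).Separable := by
  set f := C a * X ^ (n + 1) + C b * X ^ n + C c * X + C d
  have hf' : derivative f = C a * X ^ n + C c := by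
    simp [f, hn, derivative_X_pow]
  have key : C a * f - (C a * X + C b) * derivative f = C (a * d - b * c) := by
    simp only [hf', f, map_sub, map_mul]
    ring
  have hunit : C (a * d - b * c)⁻¹ * C (a * d - b * c) = 1 := by
    rw [← C_mul, inv_mul_cancel₀ hdet, C_1]
  exact ⟨C (a * d - b * c)⁻¹ * C a, -C (a * d - b * c)⁻¹ * (C a * X + C b), by
    linear_combination C (a * d - b * c)⁻¹ * key + hunit⟩

/-- The zeros on `ℙ¹ = Option k` of the binary form `a S^(n+1) + b S^n T + c S T^n + d T^(n+1)`,
whose value at `none = [1 : 0]` is `a`. -/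
theorem ncard_zeros_option [IsAlgClosed k] {n : ℕ} (hn : 1 < n) (hnk : (n : k) = 0) {a b c d : k}
    (hdet : a * d - b * c ≠ 0) :
    {o : Option k | o.elim a (fun s => a * s ^ (n + 1) + b * s ^ n + c * s + d) = 0}.ncard
      = n + 1 := by
  set f := C a * X ^ (n + 1) + C b * X ^ n + C c * X + C d
  set S := {s : k | a * s ^ (n + 1) + b * s ^ n + c * s + d = 0}
  have hS : S = {s | f.IsRoot s} := by
    ext s
    simp [S, f]
  have hsep := separable_of_det_ne_zero hnk hdet
  have hfin : S.Finite := hS ▸ finite_setOfPred_isRoot hsep.ne_zero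
  have hcard : S.ncard = f.natDegree := hS ▸ ncard_setOf_isRoot_of_separable hsep
  by_cases ha : a = 0
  · have hb : b ≠ 0 := by rintro rfl; simp [ha] at hdet
    have hdeg : f.natDegree = n := by
      simp only [f, ha, map_zero, zero_mul, zero_add]
      compute_degree!
      · simp [hb, show n ≠ 1 by omega, show n ≠ 0 by omega]
      all_goals omega
    have hset : {o : Option k | o.elim a (fun s => a * s ^ (n + 1) + b * s ^ n + c * s + d) = 0}
        = insert none (some '' S) := by
      ext (_ | s) <;> simp [S, ha]
    rw [hset, Set.ncard_insert_of_notMem (by simp) (hfin.image _),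
      Set.ncard_image_of_injective _ (Option.some_injective k), hcard, hdeg]
  · have hdeg : f.natDegree = n + 1 := by
      simp only [f]
      compute_degree!
      simp [show n ≠ 0 by omega, ha]
    have hset : {o : Option k | o.elim a (fun s => a * s ^ (n + 1) + b * s ^ n + c * s + d) = 0}
        = some '' S := by
      ext (_ | s) <;> simp [S, ha]
    rw [hset, Set.ncard_image_of_injective _ (Option.some_injective k), hcard, hdeg]

theorem exists_pow_ne_self [Infinite k] {n : ℕ} (hn : 1 < n) : ∃ t : k, t ^ n ≠ t := by
  by_contra! h
  have h0 := eq_zero_of_infinite_isRoot (X ^ n - X : k[X])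
    (by simpa [h] using Set.infinite_univ (α := k))
  simpa [coeff_X, hn.ne] using congrArg (coeff · n) h0

end RootCount

theorem iterateFrobenius_ne_id {k : Type*} [Field k] [Infinite k] {p e : ℕ} [Fact p.Prime]
    [CharP k p] (he : 1 ≤ e) : iterateFrobenius k p e ≠ RingHom.id k := by
  obtain ⟨t, ht⟩ := exists_pow_ne_self (k := k)
    (Nat.one_lt_pow (by omega) (Fact.out : p.Prime).one_lt : 1 < p ^ e)
  exact fun h => ht (by simpa [iterateFrobenius_def] using DFunLike.congr_fun h t)

theorem Matrix.separatingRight_toLinearMapₛₗ₂' {k n : Type*} [Field k] [Fintype n]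
    [DecidableEq n] {σ : k →+* k} {A : Matrix n n k} (hA : IsUnit A) :
    (Matrix.toLinearMapₛₗ₂' k σ (RingHom.id k) A).SeparatingRight := by
  intro y hy
  apply Matrix.mulVec_injective_of_isUnit hA
  ext i
  simpa [Matrix.toLinearMapₛₗ₂'_apply, Matrix.mulVec, dotProduct, Pi.single_apply, mul_comm]
    using hy (Pi.single i 1)

theorem frobForm_eq_toLinearMapₛₗ₂' {k : Type*} [Field k] {p e : ℕ} [ExpChar k p]
    (A : Matrix (Fin 4) (Fin 4) k) (x : Fin 4 → k) :
    frobForm (p ^ e) A x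
      = Matrix.toLinearMapₛₗ₂' k (iterateFrobenius k p e) (RingHom.id k) A x x := by
  simp only [frobForm, Matrix.toLinearMapₛₗ₂'_apply, iterateFrobenius_def, RingHom.id_apply,
    smul_eq_mul]
  exact Finset.sum_congr rfl fun i _ => Finset.sum_congr rfl fun j _ => by ring

theorem ncard_transversals {k V : Type*} [Field k] [IsAlgClosed k] [AddCommGroup V] [Module k V]
    {p e : ℕ} [Fact p.Prime] [CharP k p] (he : 1 ≤ e)
    (B : V →ₛₗ[iterateFrobenius k p e] V →ₗ[k] k) (hB : B.SeparatingRight)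
    {L L' : Submodule k V} (hLL' : IsCompl L L') (hL : finrank k L = 2) (hL' : finrank k L' = 2)
    (hLB : ∀ x ∈ L, B x x = 0) (hL'B : ∀ x ∈ L', B x x = 0) :
    (B.transversals L L').ncard = (p ^ e) ^ 2 + 1 := by
  obtain ⟨v₁, v₂, hv, rfl⟩ := exists_linearIndependent_pair_span_eq hL
  obtain ⟨w₁, w₂, hw, rfl⟩ := exists_linearIndependent_pair_span_eq hL'
  have hσ := iterateFrobenius_ne_id (k := k) he
  have hLiso : ∀ x ∈ span k {v₁, v₂}, ∀ y ∈ span k {v₁, v₂}, B x y = 0 :=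
    fun _ hx _ hy => B.apply_eq_zero_of_forall_apply_self_eq_zero hσ hLB hx hy
  have hL'iso : ∀ x ∈ span k {w₁, w₂}, ∀ y ∈ span k {w₁, w₂}, B x y = 0 :=
    fun _ hx _ hy => B.apply_eq_zero_of_forall_apply_self_eq_zero hσ hL'B hx hy
  have hP := B.det_ne_zero_of_separatingRight hB hL'iso hw (subset_span (by simp))
    (subset_span (by simp)) (hLL'.symm.sup_eq_top)
  have hQ := B.det_ne_zero_of_separatingRight hB hLiso hv (subset_span (by simp))
    (subset_span (by simp)) hLL'.sup_eq_top
  have hW : ∀ u ∈ span k {v₁, v₂}, u ≠ 0 → B.orthoVec w₁ w₂ u ≠ 0 :=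
    fun _ => B.orthoVec_ne_zero hw hP
  rw [B.transversals_eq_image_orthoLine hσ hv hLL'.disjoint hLB hL'B hW,
    Set.ncard_image_of_injective _ (B.orthoLine_injective hv hLL'.disjoint)]
  have hn : 1 < (p ^ e) ^ 2 :=
    Nat.one_lt_pow two_ne_zero (Nat.one_lt_pow (by omega) (Fact.out : p.Prime).one_lt)
  have hnk : (((p ^ e) ^ 2 : ℕ) : k) = 0 := by simp [CharP.cast_eq_zero, show e ≠ 0 by omega]
  convert ncard_zeros_option hn hnk
    (by rw [B.orthoVec_det]; exact mul_ne_zero ((map_ne_zero _).2 hP) hQ) using 2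
  ext (_ | s)
  · rfl
  · simp only [Set.mem_ofPred_eq, Option.elim_some, B.apply_orthoVec_lineParam,
      iterateFrobenius_def, ← pow_mul, ← sq]
    constructor <;> intro h <;> linear_combination h

/-- Let `X` be a smooth extremal surface of degree `q+1` in
ℙ³(k) and let `L`, `L'` be two skew lines on `X`.  Then the set of lines on
`X` meeting both `L` and `L'` has cardinality exactly `q²+1`. -/
theorem count_lines_meeting_skew_pair {k : Type*} [Field k] [IsAlgClosed k]
    (p e q : ℕ) (hp : p.Prime) (hchar : CharP k p) (he : 1 ≤ e) (hq : q = p ^ e)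
    (A : Matrix (Fin 4) (Fin 4) k) (hA : IsUnit A)
    (L L' : Submodule k (Fin 4 → k))
    (hL : IsLineOn (extremalCone k q A) L) (hL' : IsLineOn (extremalCone k q A) L')
    (hskew : SkewLine L L') :
    {M : Submodule k (Fin 4 → k) |
        IsLineOn (extremalCone k q A) M ∧ MeetsLine M L ∧ MeetsLine M L'}.ncard
      = q ^ 2 + 1 := by
  subst hq
  have := Fact.mk hp
  have := hchar
  set B := Matrix.toLinearMapₛₗ₂' k (iterateFrobenius k p e) (RingHom.id k) A
  have hcone : extremalCone k (p ^ e) A = {x | B x x = 0} :=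
    Set.ext fun x => iff_of_eq (congrArg (· = 0) (frobForm_eq_toLinearMapₛₗ₂' A x))
  have hlines : {M | IsLineOn {x | B x x = 0} M ∧ MeetsLine M L ∧ MeetsLine M L'}
      = B.transversals L L' :=
    Set.ext fun M => and_assoc
  have hcompl : IsCompl L L' := (isCompl_iff_disjoint L L'
    (by simp [show finrank k L = 2 from hL.1, show finrank k L' = 2 from hL'.1])).2
    (disjoint_iff.2 hskew)
  rw [hcone] at hL hL'
  rw [hcone, hlines]
  exact ncard_transversals he B (Matrix.separatingRight_toLinearMapₛₗ₂' hA) hcompl hL.1 hL'.1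
    hL.2 hL'.2
end

section
/- Let n ≥ 2 and let X be the smooth extremal hypersurface in ℙ^{n−1}(k) of degree q+1 cut out by the Fermat Frobenius form x₁^{q+1} + x₂^{q+1} + ⋯ + xₙ^{q+1}. Then the group Aut(X) of projective linear automorphisms of X (the subgroup of PGL(n,k) of classes of invertible matrices g with g(X) = X) is isomorphic to PU(n, F_{q²}), the quotient of the finite unitary group U(n, F_{q²}) = { g ∈ GL(n, F_{q²}) : (g^{[q]})ᵀ · g = Iₙ } by its center { λIₙ : λ^{q+1} = 1 }. -/
open Matrix

/-! **Statement 10.**  Setup: `k` is an algebraically closed field of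
characteristic `p > 0` and `q = p^e` with `e ≥ 1`.  `X ⊆ ℙ^{n-1}(k)` is the
smooth extremal (Fermat) hypersurface cut out by `x₁^{q+1} + ⋯ + xₙ^{q+1}`.
We identify `GL(n,k)` with the unit group of the `n × n` matrix ring over
`k`, and `PGL(n,k)` with its quotient by the center.  `Aut(X)` is the
subgroup of `PGL(n,k)` of classes of matrices `g` with `g(X) = X` as subsets
of ℙ^{n-1}(k); since the form is homogeneous, this is equivalent to `g`
mapping the affine cone of `X` in `kⁿ` onto itself.  The claim is that
`Aut(X)` is isomorphic to `PU(n, F_{q²})`, the quotient of the finite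
unitary group `U(n, F_{q²}) = {g ∈ GL(n, F_{q²}) | (g^{[q]})ᵀ g = 1}` by its
center `{λ·1 | λ^{q+1} = 1}`, where `F_{q²} = {x : k | x^{q²} = x}`. -/

variable (k : Type*) [Field k] (p e n : ℕ) [Fact p.Prime] [CharP k p]

/-- The affine cone of the Fermat hypersurface `x₁^{q+1} + ⋯ + xₙ^{q+1} = 0`
of degree `q + 1 = p^e + 1` in ℙ^{n-1}(k). -/
def fermatCone : Set (Fin n → k) :=
  {x | ∑ i, x i ^ (p ^ e + 1) = 0}

/-- The subgroup of `GL(n,k) = (Matrix (Fin n) (Fin n) k)ˣ` consisting of the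
matrices mapping the Fermat cone onto itself. -/
def fermatStabilizer : Subgroup (Matrix (Fin n) (Fin n) k)ˣ where
  carrier := {g | ∀ v, v ∈ fermatCone k p e n ↔
      (g : Matrix (Fin n) (Fin n) k) *ᵥ v ∈ fermatCone k p e n}
  one_mem' := by
    intro v
    rw [Units.val_one, Matrix.one_mulVec]
  mul_mem' := by
    intro a b ha hb v
    rw [Units.val_mul, ← Matrix.mulVec_mulVec]
    exact (hb v).trans (ha _)
  inv_mem' := by
    intro a ha v
    have h := ha (((a⁻¹ : (Matrix (Fin n) (Fin n) k)ˣ) : Matrix (Fin n) (Fin n) k) *ᵥ v)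
    rw [Matrix.mulVec_mulVec, Units.mul_inv, Matrix.one_mulVec] at h
    exact h.symm

/-- `PGL(n, k)`: the quotient of `GL(n,k)` by its center. -/
abbrev ProjGL (k : Type*) [Field k] (n : ℕ) :=
  (Matrix (Fin n) (Fin n) k)ˣ ⧸ Subgroup.center (Matrix (Fin n) (Fin n) k)ˣ

/-- `Aut(X)` for the Fermat extremal hypersurface `X`: the subgroup of
`PGL(n,k)` of classes of invertible matrices mapping `X` onto itself.
(Scalar matrices preserve the cone, so a class lies in this subgroup iff
every/some representing matrix maps `X` onto itself.) -/
def fermatAut : Subgroup (ProjGL k n) :=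
  Subgroup.map (QuotientGroup.mk' (Subgroup.center (Matrix (Fin n) (Fin n) k)ˣ))
    (fermatStabilizer k p e n)

section UnitaryLemmas

variable {k}

private lemma mapPow_one (m : ℕ) :
    (1 : Matrix (Fin n) (Fin n) k).map (fun x => x ^ p ^ m) = 1 := by
  have h : (fun x : k => x ^ p ^ m) = ⇑(iterateFrobenius k p m) := rfl
  rw [h, ← RingHom.mapMatrix_apply, _root_.map_one]

private lemma mapPow_mul (m : ℕ) (M N : Matrix (Fin n) (Fin n) k) :
    (M * N).map (fun x => x ^ p ^ m)
      = M.map (fun x => x ^ p ^ m) * N.map (fun x => x ^ p ^ m) := by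
  have h : (fun x : k => x ^ p ^ m) = ⇑(iterateFrobenius k p m) := rfl
  rw [h]
  exact Matrix.map_mul

private lemma mapPow_mapPow (M : Matrix (Fin n) (Fin n) k) :
    (M.map (fun x => x ^ p ^ e)).map (fun x => x ^ p ^ e)
      = M.map (fun x => x ^ p ^ (2 * e)) := by
  ext i j
  simp [Matrix.map_apply, ← pow_mul, ← pow_add, two_mul]

end UnitaryLemmas

/-- The finite unitary group
`U(n, F_{q²}) = { g ∈ GL(n, F_{q²}) | (g^{[q]})ᵀ g = 1 }`, realized as the
subgroup of `GL(n,k)` of matrices with entries in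
`F_{q²} = {x : k | x^(q²) = x}` satisfying the unitary relation. -/
def unitaryFq : Subgroup (Matrix (Fin n) (Fin n) k)ˣ where
  carrier := {g | (g : Matrix (Fin n) (Fin n) k).map (fun x => x ^ p ^ (2 * e))
        = (g : Matrix (Fin n) (Fin n) k) ∧
      ((g : Matrix (Fin n) (Fin n) k).map (fun x => x ^ p ^ e))ᵀ
          * (g : Matrix (Fin n) (Fin n) k) = 1}
  one_mem' := by
    refine ⟨by rw [Units.val_one, mapPow_one], ?_⟩
    rw [Units.val_one, mapPow_one, Matrix.transpose_one, one_mul]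
  mul_mem' := by
    rintro a b ⟨ha1, ha2⟩ ⟨hb1, hb2⟩
    constructor
    · rw [Units.val_mul, mapPow_mul, ha1, hb1]
    · rw [Units.val_mul, mapPow_mul, Matrix.transpose_mul, mul_assoc,
        ← mul_assoc (((a : Matrix (Fin n) (Fin n) k).map (fun x => x ^ p ^ e))ᵀ),
        ha2, one_mul, hb2]
  inv_mem' := by
    rintro a ⟨ha1, ha2⟩
    have hinv : ((a⁻¹ : (Matrix (Fin n) (Fin n) k)ˣ) : Matrix (Fin n) (Fin n) k)
        = ((a : Matrix (Fin n) (Fin n) k).map (fun x => x ^ p ^ e))ᵀ :=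
      Units.inv_eq_of_mul_eq_one_left ha2
    have hcomm : ((fun x : k => x ^ p ^ (2 * e)) ∘ (fun x : k => x ^ p ^ e))
        = (fun x : k => x ^ p ^ e) ∘ (fun x : k => x ^ p ^ (2 * e)) := by
      funext x
      simp only [Function.comp_apply, ← pow_mul, mul_comm]
    have h2 : (((a : Matrix (Fin n) (Fin n) k).map (fun x => x ^ p ^ e))ᵀ.map
          (fun x => x ^ p ^ e))ᵀ = (a : Matrix (Fin n) (Fin n) k) := by
      rw [Matrix.transpose_map, Matrix.transpose_transpose, mapPow_mapPow, ha1]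
    constructor
    · rw [hinv, ← Matrix.transpose_map, Matrix.map_map, hcomm, ← Matrix.map_map,
        Matrix.transpose_map, ha1]
    · rw [hinv, h2, ← hinv, Units.mul_inv]

/-- The center `{ λ·1 | λ^{q+1} = 1 }` of the finite unitary group
`U(n, F_{q²})`, as a subgroup of `unitaryFq`. -/
def unitaryCenter : Subgroup ↥(unitaryFq k p e n) where
  carrier := {g | ∃ c : k, c ^ (p ^ e + 1) = 1 ∧
      ((g : (Matrix (Fin n) (Fin n) k)ˣ) : Matrix (Fin n) (Fin n) k)
        = c • (1 : Matrix (Fin n) (Fin n) k)}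
  one_mem' := ⟨1, one_pow _, by rw [OneMemClass.coe_one, Units.val_one, one_smul]⟩
  mul_mem' := by
    rintro a b ⟨c, hc, ha⟩ ⟨d, hd, hb⟩
    refine ⟨c * d, by rw [mul_pow, hc, hd, one_mul], ?_⟩
    rw [MulMemClass.coe_mul, Units.val_mul, ha, hb, smul_mul_assoc, one_mul,
      smul_smul]
  inv_mem' := by
    rintro a ⟨c, hc, ha⟩
    have hc0 : c ≠ 0 := by
      intro h
      rw [h, zero_pow (Nat.succ_ne_zero _)] at hc
      exact zero_ne_one hc
    refine ⟨c⁻¹, by rw [inv_pow, hc, inv_one], ?_⟩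
    have hmul : (c⁻¹ • (1 : Matrix (Fin n) (Fin n) k))
        * ((a : (Matrix (Fin n) (Fin n) k)ˣ) : Matrix (Fin n) (Fin n) k) = 1 := by
      rw [ha, smul_mul_assoc, one_mul, smul_smul, inv_mul_cancel₀ hc0, one_smul]
    rw [InvMemClass.coe_inv]
    exact Units.inv_eq_of_mul_eq_one_left hmul

instance unitaryCenter_normal : (unitaryCenter k p e n).Normal := by
  constructor
  rintro m ⟨c, hc, hm⟩ g
  refine ⟨c, hc, ?_⟩
  rw [MulMemClass.coe_mul, MulMemClass.coe_mul, Units.val_mul, Units.val_mul, hm,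
    mul_smul_comm, mul_one, smul_mul_assoc, InvMemClass.coe_inv, Units.mul_inv]

/-! Writing `q = p ^ e` and `v^[q]` for the coordinatewise `q`-th power, the Fermat form of
`g v` is `(v^[q])ᵀ A v` with `A = (g^[q])ᵀ g`. If `g` preserves the cone, testing on
`v = e_j + t e_l` with `t ^ (q + 1) = -1` gives a quadratic equation in `t` with `q + 1 ≥ 3`
distinct roots, so `A` is a nonzero scalar `c`. Rescaling `g` by a `(q + 1)`-st root of `c⁻¹`
makes it unitary, and unitary matrices automatically have entries in `F_{q²}`. Hence every class
of `Aut(X)` has a unitary representative, two of which agree exactly when they differ by a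
scalar `λ` with `λ ^ (q + 1) = 1`. -/

lemma Matrix.map_pow_smul {R ι : Type*} [CommMonoid R] {m : ℕ} (c : R) (M : Matrix ι ι R) :
    (c • M).map (· ^ m) = c ^ m • M.map (· ^ m) := by
  ext i j
  simp [mul_pow]

lemma Matrix.exists_eq_smul_one_of_forall_ne {R ι : Type*} [Semiring R] [DecidableEq ι]
    [Nonempty ι] {A : Matrix ι ι R} (h : ∀ j l, j ≠ l → A j l = 0 ∧ A j j = A l l) :
    ∃ c : R, A = c • 1 := by
  obtain ⟨j₀⟩ := ‹Nonempty ι›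
  refine ⟨A j₀ j₀, Matrix.ext fun i j => ?_⟩
  rcases eq_or_ne i j with rfl | hij
  · rcases eq_or_ne i j₀ with rfl | hi
    · simp
    · simp [(h i j₀ hi).2]
  · simp [hij, (h i j hij).1]

section FrobeniusForm

variable {R : Type*} [CommSemiring R] {ι : Type*} [Fintype ι]

def frobeniusForm (q : ℕ) (A : Matrix ι ι R) (v : ι → R) : R :=
  (fun i => v i ^ q) ⬝ᵥ (A *ᵥ v)

lemma frobeniusForm_one [DecidableEq ι] (q : ℕ) (v : ι → R) :
    frobeniusForm q 1 v = ∑ i, v i ^ (q + 1) := by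
  simp [frobeniusForm, dotProduct, pow_succ]

lemma frobeniusForm_single_add_single [DecidableEq ι] {q : ℕ} (hq : q ≠ 0) (A : Matrix ι ι R)
    {j l : ι} (hjl : j ≠ l) (t : R) :
    frobeniusForm q A (Pi.single j 1 + Pi.single l t)
      = A j j + A j l * t + A l j * t ^ q + A l l * t ^ (q + 1) := by
  have hpow : (fun i => (Pi.single j 1 + Pi.single l t : ι → R) i ^ q)
      = Pi.single j 1 + Pi.single l (t ^ q) := by
    ext i
    by_cases hij : i = j
    · subst hij; simp [hjl]
    · by_cases hil : i = l
      · subst hil; simp [hij]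
      · simp [hij, hil, hq]
  rw [frobeniusForm, hpow]
  simp only [dotProduct_mulVec, add_vecMul, single_vecMul, dotProduct_add, dotProduct_single,
    Pi.add_apply, Pi.smul_apply, row_apply, smul_eq_mul]
  ring

end FrobeniusForm

section RootsOfPow

open Polynomial

variable {K : Type*} [Field K] [IsAlgClosed K]

lemma card_nthRootsFinset_of_isAlgClosed {m : ℕ} [NeZero (m : K)] {a : K} (ha : a ≠ 0) :
    (nthRootsFinset m a).card = m := by
  classical
  obtain ⟨ζ, hζ⟩ := HasEnoughRootsOfUnity.exists_primitiveRoot K m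
  have hm : m ≠ 0 := (NeZero.of_neZero_natCast K).out
  rw [nthRootsFinset_def, Multiset.toFinset_card_of_nodup (hζ.nthRoots_nodup ha),
    hζ.card_nthRoots, if_pos (IsAlgClosed.exists_pow_nat_eq a (Nat.pos_of_ne_zero hm))]

lemma quadratic_coeffs_eq_zero_of_forall_pow_eq {m : ℕ} [NeZero (m : K)] (hm : 3 ≤ m) {d : K}
    (hd : d ≠ 0) {a b c : K} (h : ∀ t : K, t ^ m = d → a * t ^ 2 + b * t + c = 0) :
    a = 0 ∧ b = 0 ∧ c = 0 := by
  have hQ : C a * X ^ 2 + C b * X + C c = 0 := by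
    refine eq_zero_of_natDegree_lt_card_of_eval_eq_zero' _ (nthRootsFinset m d) (fun t ht => ?_) ?_
    · simpa using h t ((mem_nthRootsFinset (by omega) d).1 ht)
    · rw [card_nthRootsFinset_of_isAlgClosed hd]
      exact natDegree_quadratic_le.trans_lt (by omega)
  refine ⟨?_, ?_, ?_⟩
  · simpa using congrArg (fun P : K[X] => P.coeff 2) hQ
  · simpa using congrArg (fun P : K[X] => P.coeff 1) hQ
  · simpa using congrArg (fun P : K[X] => P.coeff 0) hQ

end RootsOfPow

section CharP

variable {k p e}
variable {ι : Type*} [Fintype ι]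

lemma sum_mulVec_pow_add_one (M : Matrix ι ι k) (v : ι → k) :
    ∑ i, (M *ᵥ v) i ^ (p ^ e + 1) = frobeniusForm (p ^ e) ((M.map (· ^ p ^ e))ᵀ * M) v := by
  have hfrob : (fun i => (M *ᵥ v) i ^ p ^ e) = M.map (· ^ p ^ e) *ᵥ (fun i => v i ^ p ^ e) :=
    funext (RingHom.map_mulVec (iterateFrobenius k p e) M v)
  calc ∑ i, (M *ᵥ v) i ^ (p ^ e + 1) = (fun i => (M *ᵥ v) i ^ p ^ e) ⬝ᵥ (M *ᵥ v) := by
        simp only [dotProduct, pow_succ]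
    _ = _ := by
        rw [hfrob, frobeniusForm, ← mulVec_mulVec, dotProduct_mulVec (fun i => v i ^ p ^ e),
          vecMul_transpose]

lemma exists_eq_smul_one_of_frobeniusForm_eq_zero [IsAlgClosed k] (he : 1 ≤ e) [DecidableEq ι]
    [Nonempty ι] (A : Matrix ι ι k)
    (hA : ∀ v, frobeniusForm (p ^ e) 1 v = 0 → frobeniusForm (p ^ e) A v = 0) :
    ∃ c : k, A = c • 1 := by
  have hq : 2 ≤ p ^ e := (Fact.out : p.Prime).two_le.trans (Nat.le_self_pow (by omega) p)
  have : NeZero ((p ^ e + 1 : ℕ) : k) := ⟨by simp [zero_pow (by omega : e ≠ 0)]⟩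
  refine exists_eq_smul_one_of_forall_ne fun j l hjl => ?_
  have hquad : ∀ t : k, t ^ (p ^ e + 1) = -1 →
      A j l * t ^ 2 + (A j j - A l l) * t + -A l j = 0 := by
    intro t ht
    have hv := hA (Pi.single j 1 + Pi.single l t) <| by
      rw [frobeniusForm_single_add_single (by omega) _ hjl]
      simp [hjl, hjl.symm, ht]
    rw [frobeniusForm_single_add_single (by omega) _ hjl] at hv
    linear_combination t * hv - (A l j + A l l * t) * ht
  obtain ⟨hoff, hdiag, -⟩ :=
    quadratic_coeffs_eq_zero_of_forall_pow_eq (by omega) (neg_ne_zero.2 one_ne_zero) hquad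
  exact ⟨hoff, sub_eq_zero.1 hdiag⟩

end CharP

section Unitary

variable {k p e n}

lemma map_pow_two_mul_eq_self_of_unitary {M : Matrix (Fin n) (Fin n) k}
    (hM : (M.map (· ^ p ^ e))ᵀ * M = 1) : M.map (· ^ p ^ (2 * e)) = M := by
  have h1 : M.map (· ^ p ^ e) * Mᵀ = 1 := by
    simpa using congrArg transpose (mul_eq_one_comm.mp hM)
  have h2 : M.map (· ^ p ^ (2 * e)) * (M.map (· ^ p ^ e))ᵀ = 1 := by
    simpa only [mapPow_mul, mapPow_mapPow, transpose_map, mapPow_one] using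
      congrArg (fun X => X.map (· ^ p ^ e)) h1
  exact left_inv_eq_right_inv h2 hM

lemma mem_unitaryFq_iff {u : (Matrix (Fin n) (Fin n) k)ˣ} :
    u ∈ unitaryFq k p e n ↔ ((u : Matrix (Fin n) (Fin n) k).map (· ^ p ^ e))ᵀ * u = 1 :=
  ⟨And.right, fun h => ⟨map_pow_two_mul_eq_self_of_unitary h, h⟩⟩

lemma unitaryFq_le_fermatStabilizer : unitaryFq k p e n ≤ fermatStabilizer k p e n := by
  intro u hu v
  show ∑ i, v i ^ (p ^ e + 1) = 0 ↔ ∑ i, (u.val *ᵥ v) i ^ (p ^ e + 1) = 0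
  rw [sum_mulVec_pow_add_one, hu.2, frobeniusForm_one]

lemma exists_transpose_map_mul_eq_smul_one_of_mem_fermatStabilizer [IsAlgClosed k] (he : 1 ≤ e)
    [NeZero n]
    {g : (Matrix (Fin n) (Fin n) k)ˣ} (hg : g ∈ fermatStabilizer k p e n) :
    ∃ c : k, c ≠ 0 ∧ ((g : Matrix (Fin n) (Fin n) k).map (· ^ p ^ e))ᵀ * g = c • 1 := by
  obtain ⟨c, hc⟩ := exists_eq_smul_one_of_frobeniusForm_eq_zero he
    (((g : Matrix (Fin n) (Fin n) k).map (· ^ p ^ e))ᵀ * (g : Matrix (Fin n) (Fin n) k))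
    fun v hv => by
      rw [frobeniusForm_one] at hv
      rw [← sum_mulVec_pow_add_one]
      exact (hg v).1 hv
  refine ⟨c, ?_, hc⟩
  rintro rfl
  have hunit : IsUnit (((g : Matrix (Fin n) (Fin n) k).map (· ^ p ^ e))ᵀ *
      (g : Matrix (Fin n) (Fin n) k)) :=
    ((isUnit_transpose _).2 (g.isUnit.map (iterateFrobenius k p e).mapMatrix)).mul g.isUnit
  rw [hc, zero_smul] at hunit
  exact not_isUnit_zero hunit

lemma exists_mem_center_mul_mem_unitaryFq [IsAlgClosed k] (he : 1 ≤ e) [NeZero n]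
    {g : (Matrix (Fin n) (Fin n) k)ˣ} (hg : g ∈ fermatStabilizer k p e n) :
    ∃ z ∈ Subgroup.center (Matrix (Fin n) (Fin n) k)ˣ, z * g ∈ unitaryFq k p e n := by
  obtain ⟨c, hc0, hc⟩ := exists_transpose_map_mul_eq_smul_one_of_mem_fermatStabilizer he hg
  obtain ⟨a, ha⟩ := IsAlgClosed.exists_pow_nat_eq c⁻¹ (Nat.succ_pos (p ^ e))
  have ha0 : a ≠ 0 := by
    rintro rfl
    exact inv_ne_zero hc0 (by simpa using ha.symm)
  let z := GeneralLinearGroup.scalar (Fin n) (Units.mk0 a ha0)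
  have hz : (z * g : Matrix (Fin n) (Fin n) k) = a • g := by
    simp [z, scalar_apply, ← smul_one_eq_diagonal]
  refine ⟨z, by rw [GeneralLinearGroup.center_eq_range_scalar]; exact ⟨_, rfl⟩,
    mem_unitaryFq_iff.2 ?_⟩
  rw [Units.val_mul, hz, map_pow_smul, transpose_smul, smul_mul_smul_comm, hc, smul_smul,
    ← pow_succ, ha, inv_mul_cancel₀ hc0, one_smul]

lemma mem_unitaryCenter_iff [NeZero n] {u : unitaryFq k p e n} :
    u ∈ unitaryCenter k p e n ↔
      (u : (Matrix (Fin n) (Fin n) k)ˣ) ∈ Subgroup.center (Matrix (Fin n) (Fin n) k)ˣ := by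
  rw [GeneralLinearGroup.mem_center_iff_val_mem_range_scalar]
  simp only [Set.mem_range, scalar_apply, ← smul_one_eq_diagonal]
  constructor
  · rintro ⟨c, -, hc⟩
    exact ⟨c, hc.symm⟩
  · rintro ⟨c, hc⟩
    refine ⟨c, ?_, hc.symm⟩
    have hu := u.2.2
    rw [← hc, map_pow_smul, mapPow_one, transpose_smul, transpose_one, smul_mul_smul_comm,
      one_mul, ← pow_succ] at hu
    simpa using congrFun₂ hu 0 0

end Unitary

section Projectivization

def unitaryToFermatAut : unitaryFq k p e n →* fermatAut k p e n :=
  ((QuotientGroup.mk' _).subgroupMap (fermatStabilizer k p e n)).comp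
    (Subgroup.inclusion unitaryFq_le_fermatStabilizer)

variable {k p e n}

lemma coe_unitaryToFermatAut (u : unitaryFq k p e n) :
    (unitaryToFermatAut k p e n u : ProjGL k n) =
      QuotientGroup.mk (u : (Matrix (Fin n) (Fin n) k)ˣ) :=
  rfl

lemma unitaryToFermatAut_surjective [IsAlgClosed k] (he : 1 ≤ e) [NeZero n] :
    Function.Surjective (unitaryToFermatAut k p e n) := by
  rintro ⟨_, g, hg, rfl⟩
  obtain ⟨z, hz, hzg⟩ := exists_mem_center_mul_mem_unitaryFq he hg
  refine ⟨⟨z * g, hzg⟩, Subtype.ext ?_⟩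
  rw [coe_unitaryToFermatAut, QuotientGroup.mk_mul, (QuotientGroup.eq_one_iff z).2 hz, one_mul]
  rfl

lemma ker_unitaryToFermatAut [NeZero n] :
    (unitaryToFermatAut k p e n).ker = unitaryCenter k p e n := by
  ext u
  rw [MonoidHom.mem_ker, mem_unitaryCenter_iff, ← QuotientGroup.eq_one_iff, Subtype.ext_iff,
    coe_unitaryToFermatAut]
  rfl

end Projectivization

/-- For `n ≥ 2`, the automorphism group of the smooth
extremal Fermat hypersurface of degree `q+1` in ℙ^{n-1}(k) — the subgroup of
`PGL(n,k)` of classes of invertible matrices `g` with `g(X) = X` — is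
isomorphic to `PU(n, F_{q²})`, the quotient of the finite unitary group
`U(n, F_{q²})` by its center `{λ·1 | λ^{q+1} = 1}`. -/
theorem fermatAut_iso_PU [IsAlgClosed k] (hn : 2 ≤ n) (he : 1 ≤ e) :
    Nonempty (↥(fermatAut k p e n) ≃* (↥(unitaryFq k p e n) ⧸ unitaryCenter k p e n)) := by
  have : NeZero n := ⟨by omega⟩
  exact ⟨(QuotientGroup.quotientKerEquivOfSurjective _
    (unitaryToFermatAut_surjective he)).symm.trans
      (QuotientGroup.quotientMulEquivOfEq ker_unitaryToFermatAut)⟩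
end

section
/- Let X be a smooth extremal surface of degree q+1 in ℙ³(k). Then Aut(X) acts transitively on the set of star chords for X: for any two star chords ℓ and ℓ' there exists g ∈ Aut(X) with g(ℓ) = ℓ'. -/
/-!
The Frobenius form is `x ↦ B x x` for the form `B x y = ∑ A i j * x i ^ q * y j`, which is
additive in both arguments, linear in `y`, `q`-semilinear in `x`, and nondegenerate since `A` is
invertible. A line on the surface is totally isotropic for `B`, so for a star point `v` the plane
spanned by two lines of its star is at once `{y | B v y = 0}` and `{y | B y v = 0}`. On a star chord
through star points `v`, `v'` we have `B v v' ≠ 0` (otherwise the chord lies on the surface), and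
over an algebraically closed field `v`, `v'` rescale to a hyperbolic pair. Its orthogonal
complement is a nondegenerate plane, which contains a hyperbolic pair as well, by solving equations
of degree `q + 1`. Thus every star chord is spanned by the first two vectors of a basis whose Gram
matrix is one fixed matrix, and the linear map between two such bases is an isometry of `B`: an
automorphism of the surface carrying one chord onto the other.
-/

open Module

/-- A star chord for the surface with affine cone `X`: a line of ℙ³(k) not
contained in the surface that passes through at least two star points. -/
def IsStarChord {k : Type*} [Field k] (q : ℕ) (X : Set (Fin 4 → k))
    (ℓ : Submodule k (Fin 4 → k)) : Prop :=
  IsLine ℓ ∧ ¬ ((ℓ : Set (Fin 4 → k)) ⊆ X) ∧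
    ∃ c c' : Submodule k (Fin 4 → k), c ≠ c' ∧
      IsStarPoint q X c ∧ IsStarPoint q X c' ∧ c ≤ ℓ ∧ c' ≤ ℓ

namespace Submodule

variable {k V : Type*} [Field k] [AddCommGroup V] [Module k V]

theorem eq_of_le_of_ne_top [FiniteDimensional k V] {T P : Submodule k V}
    (hT : finrank k T + 1 = finrank k V) (hTP : T ≤ P) (hP : P ≠ ⊤) : P = T :=
  (eq_of_le_of_finrank_le hTP (by have := finrank_lt hP; omega)).symm

theorem finrank_sup_eq_three_of_ne [FiniteDimensional k V] {L₁ L₂ : Submodule k V}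
    (h₁ : finrank k L₁ = 2) (h₂ : finrank k L₂ = 2) (hne : L₁ ≠ L₂) (hinf : L₁ ⊓ L₂ ≠ ⊥) :
    finrank k ↥(L₁ ⊔ L₂) = 3 := by
  have hpos : 1 ≤ finrank k ↥(L₁ ⊓ L₂) := one_le_finrank_iff.mpr hinf
  have hlt : finrank k ↥(L₁ ⊓ L₂) < 2 := by
    rw [← h₁]
    refine finrank_lt_finrank_of_lt (inf_le_left.lt_of_ne fun h => hne ?_)
    exact eq_of_le_of_finrank_le (h ▸ inf_le_right) (by rw [h₁, h₂])
  have := finrank_sup_add_finrank_inf_eq L₁ L₂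
  omega

theorem exists_span_pair_eq {W : Submodule k V} (hW : finrank k W = 2) {x : V} (hx : x ∈ W)
    (hx0 : x ≠ 0) : ∃ y ∈ W, y ∉ span k {x} ∧ span k {x, y} = W := by
  have : FiniteDimensional k W := .of_finrank_pos (by omega)
  have hlt : span k {x} < W := by
    refine ((span_singleton_le_iff_mem x W).mpr hx).lt_of_ne fun h => ?_
    have := finrank_span_singleton (K := k) hx0
    rw [h, hW] at this
    omega
  obtain ⟨y, hyW, hyx⟩ := SetLike.exists_of_lt hlt
  refine ⟨y, hyW, hyx, eq_of_le_of_finrank_le ?_ ?_⟩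
  · exact span_le.mpr (Set.insert_subset hx (Set.singleton_subset_iff.mpr hyW))
  · have hli : LinearIndependent k ![x, y] := (LinearIndependent.pair_iff' hx0).mpr
      fun a h => hyx (h ▸ smul_mem _ a (mem_span_singleton_self x))
    have := finrank_span_eq_card hli
    rw [Matrix.range_cons_cons_empty, Fintype.card_fin] at this
    rw [this, hW]

end Submodule

open Polynomial in
theorem RingHom.ne_id_of_forall_eq_pow {k : Type*} [Field k] [IsAlgClosed k] {σ : k →+* k}
    {q : ℕ} (hq : 1 < q) (hσ : ∀ t, σ t = t ^ q) : σ ≠ RingHom.id k := by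
  intro h
  have hroots : {t : k | (X ^ q - X : k[X]).IsRoot t} = Set.univ :=
    Set.eq_univ_of_forall fun t => by simp [← hσ, h]
  have hzero := eq_zero_of_infinite_isRoot (X ^ q - X : k[X]) (hroots ▸ Set.infinite_univ)
  have := congrArg (coeff · q) hzero
  simp [coeff_X, hq.ne] at this

namespace Matrix

def hyperbolicGram (R : Type*) [Zero R] [One R] : Matrix (Fin 4) (Fin 4) R :=
  !![0, 1, 0, 0; 1, 0, 0, 0; 0, 0, 0, 1; 0, 0, 1, 0]

theorem isUnit_hyperbolicGram {R : Type*} [CommRing R] : IsUnit (hyperbolicGram R) := by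
  refine IsUnit.of_mul_eq_one (hyperbolicGram R) ?_
  ext i j
  fin_cases i <;> fin_cases j <;> simp [hyperbolicGram, mul_apply, Fin.sum_univ_four]

theorem nondegenerate_toLinearMapₛₗ₂' {k n : Type*} [Field k] [Fintype n] [DecidableEq n]
    {A : Matrix n n k} (σ : k →+* k) (hA : IsUnit A) :
    (A.toLinearMapₛₗ₂' k σ (RingHom.id k)).Nondegenerate := by
  refine ⟨fun x hx => ?_, fun y hy => ?_⟩
  · have : vecMul (fun i => σ (x i)) A = 0 := funext fun j => by
      simpa [toLinearMapₛₗ₂'_apply, vecMul, dotProduct, Pi.single_apply, mul_comm]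
        using hx (Pi.single j 1)
    have := vecMul_injective_iff_isUnit.mpr hA (this.trans (zero_vecMul A).symm)
    exact funext fun i => (map_eq_zero σ).mp (congrFun this i)
  · have : A *ᵥ y = 0 := funext fun i => by
      simpa [toLinearMapₛₗ₂'_apply, mulVec, dotProduct, Pi.single_apply, mul_comm]
        using hy (Pi.single i 1)
    exact mulVec_injective_iff_isUnit.mpr hA (this.trans (mulVec_zero A).symm)

end Matrix

namespace LinearMap

open Submodule

section Sesquilinear

variable {k V : Type*} [Field k] [AddCommGroup V] [Module k V] {σ : k →+* k}
  {B : V →ₛₗ[σ] V →ₗ[k] k}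

variable (B) in
theorem apply_add_smul_self (x y : V) (t : k) :
    B (x + t • y) (x + t • y) = B x x + t * B x y + σ t * B y x + σ t * t * B y y := by
  simp only [map_add, map_smulₛₗ, add_apply, smul_apply, smul_eq_mul, RingHom.id_apply]
  ring

theorem apply_eq_zero_of_forall_mem_self_eq_zero (hσ : σ ≠ RingHom.id k)
    {L : Submodule k V} (hL : ∀ x ∈ L, B x x = 0) {v w : V} (hv : v ∈ L) (hw : w ∈ L) :
    B v w = 0 := by
  have hcross (t : k) : t * B w v + σ t * B v w = 0 := by
    have := hL _ (L.add_mem hw (L.smul_mem t hv))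
    rwa [apply_add_smul_self, hL w hw, hL v hv, mul_zero, add_zero, zero_add] at this
  obtain ⟨s, hs⟩ := DFunLike.ne_iff.mp hσ
  have h₁ := hcross 1
  have h₂ := hcross s
  rw [map_one, one_mul, one_mul] at h₁
  have : (σ s - s) * B v w = 0 := by linear_combination h₂ - s * h₁
  exact (mul_eq_zero.mp this).resolve_left (sub_ne_zero.mpr hs)

theorem SeparatingLeft.ker_apply_ne_top (hB : B.SeparatingLeft) {v : V} (hv : v ≠ 0) :
    ker (B v) ≠ ⊤ :=
  fun h => hv (hB v fun _ => mem_ker.mp (h ▸ mem_top))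

theorem SeparatingRight.ker_flip_apply_ne_top (hB : B.SeparatingRight) {v : V} (hv : v ≠ 0) :
    ker (B.flip v) ≠ ⊤ :=
  fun h => hv (hB v fun x => mem_ker.mp (h ▸ mem_top : x ∈ ker (B.flip v)))

theorem apply_eq_zero_iff_of_mem_inf [FiniteDimensional k V] (hV : finrank k V = 4)
    (hB : B.Nondegenerate) (hσ : σ ≠ RingHom.id k) {L₁ L₂ : Submodule k V}
    (h₁ : finrank k L₁ = 2) (h₂ : finrank k L₂ = 2) (hne : L₁ ≠ L₂)
    (hL₁ : ∀ x ∈ L₁, B x x = 0) (hL₂ : ∀ x ∈ L₂, B x x = 0) {v : V} (hv : v ∈ L₁ ⊓ L₂)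
    (y : V) : B v y = 0 ↔ B y v = 0 := by
  rcases eq_or_ne v 0 with rfl | hv0
  · simp
  have hT : finrank k ↥(L₁ ⊔ L₂) + 1 = finrank k V := by
    rw [finrank_sup_eq_three_of_ne h₁ h₂ hne ((Submodule.ne_bot_iff _).mpr ⟨v, hv, hv0⟩), hV]
  have hright : ker (B v) = L₁ ⊔ L₂ := by
    refine eq_of_le_of_ne_top hT (sup_le ?_ ?_) (hB.1.ker_apply_ne_top hv0) <;> intro x hx
    · exact apply_eq_zero_of_forall_mem_self_eq_zero hσ hL₁ (mem_inf.mp hv).1 hx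
    · exact apply_eq_zero_of_forall_mem_self_eq_zero hσ hL₂ (mem_inf.mp hv).2 hx
  have hleft : ker (B.flip v) = L₁ ⊔ L₂ := by
    refine eq_of_le_of_ne_top hT (sup_le ?_ ?_) (hB.2.ker_flip_apply_ne_top hv0) <;> intro x hx
    · exact apply_eq_zero_of_forall_mem_self_eq_zero hσ hL₁ hx (mem_inf.mp hv).1
    · exact apply_eq_zero_of_forall_mem_self_eq_zero hσ hL₂ hx (mem_inf.mp hv).2
  rw [← mem_ker, hright, ← hleft, mem_ker, flip_apply]

variable (B) in
structure IsHyperbolicPair (x y : V) : Prop where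
  isotropic_left : B x x = 0
  isotropic_right : B y y = 0
  apply_eq_one : B x y = 1
  apply_swap_eq_one : B y x = 1

theorem IsHyperbolicPair.linearIndependent {x y : V} (h : IsHyperbolicPair B x y) :
    LinearIndependent k ![x, y] := by
  refine LinearIndependent.pair_iff.mpr fun s t hst => ⟨?_, ?_⟩
  · simpa [h.isotropic_right, h.apply_swap_eq_one] using congrArg (B y) hst
  · simpa [h.isotropic_left, h.apply_eq_one] using congrArg (B x) hst

theorem IsHyperbolicPair.finrank_span {x y : V} (h : IsHyperbolicPair B x y) :
    finrank k (span k {x, y}) = 2 := by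
  have := finrank_span_eq_card h.linearIndependent
  rwa [Matrix.range_cons_cons_empty, Fintype.card_fin] at this

theorem IsHyperbolicPair.isCompl_ker_inf_ker [FiniteDimensional k V] {x y : V}
    (h : IsHyperbolicPair B x y) : IsCompl (span k {x, y}) (ker (B x) ⊓ ker (B y)) := by
  have hdisj : Disjoint (span k {x, y}) (ker (B x) ⊓ ker (B y)) := by
    rw [disjoint_iff, eq_bot_iff]
    rintro _ ⟨hz, hzx, hzy⟩
    obtain ⟨a, b, rfl⟩ := mem_span_pair.mp hz
    simp only [SetLike.mem_coe, mem_ker, map_add, map_smul, smul_eq_mul, h.isotropic_left,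
      h.isotropic_right, h.apply_eq_one, h.apply_swap_eq_one] at hzx hzy
    simp [show a = 0 by simpa using hzy, show b = 0 by simpa using hzx]
  refine ⟨hdisj, codisjoint_iff.mpr (eq_top_of_finrank_eq ?_)⟩
  have hx := Module.Dual.finrank_ker_add_one_of_ne_zero (f := B x) fun h0 => by
    simpa [h0] using h.apply_eq_one
  have hy := Module.Dual.finrank_ker_add_one_of_ne_zero (f := B y) fun h0 => by
    simpa [h0] using h.apply_swap_eq_one
  have hker := finrank_sup_add_finrank_inf_eq (ker (B x)) (ker (B y))
  have hsum := finrank_sup_add_finrank_inf_eq (span k {x, y}) (ker (B x) ⊓ ker (B y))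
  rw [hdisj.eq_bot, finrank_bot, h.finrank_span] at hsum
  have := Submodule.finrank_le (ker (B x) ⊔ ker (B y))
  have := Submodule.finrank_le (span k {x, y} ⊔ (ker (B x) ⊓ ker (B y)))
  omega

theorem linearIndependent_of_apply_eq_of_isUnit {ι : Type*} [Fintype ι] [DecidableEq ι]
    {G : Matrix ι ι k} (hG : IsUnit G) {u : ι → V} (hu : ∀ i j, B (u i) (u j) = G i j) :
    LinearIndependent k u := by
  refine Fintype.linearIndependent_iff.mpr fun a ha => ?_
  have hσa : Matrix.vecMul (fun i => σ (a i)) G = 0 := by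
    funext j
    simpa [Matrix.vecMul, dotProduct, map_sum, hu] using congrArg (B · (u j)) ha
  have := Matrix.vecMul_injective_iff_isUnit.mpr hG (hσa.trans (Matrix.zero_vecMul _).symm)
  exact fun i => (map_eq_zero σ).mp (congrFun this i)

theorem exists_linearEquiv_apply_apply_eq [FiniteDimensional k V] {ι : Type*} [Fintype ι]
    [DecidableEq ι] [Nonempty ι] (hcard : Fintype.card ι = finrank k V) {G : Matrix ι ι k}
    (hG : IsUnit G) {u u' : ι → V} (hu : ∀ i j, B (u i) (u j) = G i j)
    (hu' : ∀ i j, B (u' i) (u' j) = G i j) :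
    ∃ g : V ≃ₗ[k] V, (∀ x y, B (g x) (g y) = B x y) ∧ ∀ i, g (u i) = u' i := by
  let b := basisOfLinearIndependentOfCardEqFinrank (linearIndependent_of_apply_eq_of_isUnit hG hu)
    hcard
  let b' := basisOfLinearIndependentOfCardEqFinrank
    (linearIndependent_of_apply_eq_of_isUnit hG hu') hcard
  have hgu (i : ι) : b.equiv b' (Equiv.refl ι) (u i) = u' i := by
    simpa [b, b'] using b.equiv_apply i b' (Equiv.refl ι)
  refine ⟨b.equiv b' (Equiv.refl ι), fun x y => ?_, hgu⟩
  have : (B.comp (b.equiv b' (Equiv.refl ι)).toLinearMap).compl₂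
      (b.equiv b' (Equiv.refl ι)).toLinearMap = B :=
    ext_basis b b fun i j => by simpa [b, hgu, hu] using hu' i j
  exact congr_fun₂ this x y

theorem image_setOf_apply_self_eq_zero (g : V ≃ₗ[k] V) (hg : ∀ x y, B (g x) (g y) = B x y) :
    ⇑g '' {x | B x x = 0} = {x | B x x = 0} := by
  ext x
  rw [LinearEquiv.image_eq_preimage_symm, Set.mem_preimage, Set.mem_ofPred_eq,
    Set.mem_ofPred_eq, ← hg, LinearEquiv.apply_symm_apply]

end Sesquilinear

section AlgClosed

open Polynomial

variable {k V : Type*} [Field k] [IsAlgClosed k] [AddCommGroup V] [Module k V] {σ : k →+* k}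
  {B : V →ₛₗ[σ] V →ₗ[k] k} {q : ℕ}

theorem exists_apply_add_smul_self_eq_zero (hq : 1 < q) (hσ : ∀ t, σ t = t ^ q) (x y : V)
    (h : B y x ≠ 0 ∨ B y y ≠ 0) : ∃ t : k, B (x + t • y) (x + t • y) = 0 := by
  have hq0 : q ≠ 0 := by omega
  set P : k[X] := C (B x x) + C (B x y) * X + C (B y x) * X ^ q + C (B y y) * X ^ (q + 1)
  have hP : 0 < P.natDegree := by
    rcases h with h | h
    · refine lt_of_lt_of_le (Nat.pos_of_ne_zero hq0) (le_natDegree_of_ne_zero (n := q) ?_)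
      simpa [P, coeff_X, coeff_C, hq.ne, hq0] using h
    · refine lt_of_lt_of_le (Nat.succ_pos q) (le_natDegree_of_ne_zero (n := q + 1) ?_)
      simpa [P, coeff_X, coeff_C, hq0] using h
  obtain ⟨t, ht⟩ := IsAlgClosed.exists_root P (natDegree_pos_iff_degree_pos.mp hP).ne'
  refine ⟨t, ?_⟩
  rw [apply_add_smul_self, hσ, ← ht.eq_zero]
  simp only [P, eval_add, eval_mul, eval_C, eval_X, eval_pow, pow_succ]
  ring

theorem exists_smul_isHyperbolicPair (hq : 1 < q) (hσ : ∀ t, σ t = t ^ q) {x y : V}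
    (hx : B x x = 0) (hy : B y y = 0) (hxy : B x y ≠ 0) (hyx : B y x ≠ 0) :
    ∃ a b : k, a ≠ 0 ∧ b ≠ 0 ∧ IsHyperbolicPair B (a • x) (b • y) := by
  -- `a ^ q * b * B x y = 1` and `b ^ q * a * B y x = 1` force `a ^ (q * q - 1) = B y x / B x y ^ q`
  have hqq : 1 < q * q := by nlinarith
  obtain ⟨a, ha⟩ := IsAlgClosed.exists_pow_nat_eq (B y x / B x y ^ q) (n := q * q - 1)
    (by omega)
  have ha0 : a ≠ 0 := by
    rintro rfl
    rw [zero_pow (by omega)] at ha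
    exact div_ne_zero hyx (pow_ne_zero _ hxy) ha.symm
  have ha' : (a ^ q) ^ q = B y x / B x y ^ q * a := by
    rw [← pow_mul, ← ha, ← pow_succ, Nat.sub_add_cancel hqq.le]
  refine ⟨a, (a ^ q * B x y)⁻¹, ha0, by simp [ha0, hxy], ?_, ?_, ?_, ?_⟩ <;>
    simp only [map_smulₛₗ, smul_apply, smul_eq_mul, RingHom.id_apply, hσ, hx, hy, mul_zero]
  · field_simp
  · rw [inv_pow, mul_pow, ha']
    field_simp

variable (B) in
theorem exists_isotropic_ne_zero (hq : 1 < q) (hσ : ∀ t, σ t = t ^ q) {W : Submodule k V}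
    (hW : finrank k W = 2) : ∃ w ∈ W, w ≠ 0 ∧ B w w = 0 := by
  obtain ⟨w, hwW, hw0⟩ := W.ne_bot_iff.mp fun h => by rw [h, finrank_bot] at hW; omega
  obtain ⟨w', hw'W, hw'w, -⟩ := exists_span_pair_eq hW hwW hw0
  by_cases hww : B w w = 0
  · exact ⟨w, hwW, hw0, hww⟩
  obtain ⟨t, ht⟩ := exists_apply_add_smul_self_eq_zero hq hσ w' w (Or.inr hww)
  refine ⟨w' + t • w, W.add_mem hw'W (W.smul_mem t hwW), fun h => hw'w ?_, ht⟩
  rw [add_eq_zero_iff_eq_neg.mp h, ← neg_smul]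
  exact smul_mem _ _ (mem_span_singleton_self w)

theorem exists_isHyperbolicPair_of_finrank_eq_two (hq : 1 < q) (hσ : ∀ t, σ t = t ^ q)
    {W : Submodule k V} (hW : finrank k W = 2)
    (hleft : ∀ w ∈ W, (∀ y ∈ W, B w y = 0) → w = 0)
    (hright : ∀ w ∈ W, (∀ y ∈ W, B y w = 0) → w = 0) :
    ∃ x ∈ W, ∃ y ∈ W, IsHyperbolicPair B x y := by
  obtain ⟨w₁, hw₁W, hw₁0, hw₁⟩ := exists_isotropic_ne_zero B hq hσ hW
  obtain ⟨w₂, hw₂W, -, hspan⟩ := exists_span_pair_eq hW hw₁W hw₁0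
  have h₁₂ : B w₁ w₂ ≠ 0 := fun h => hw₁0 <| hleft w₁ hw₁W fun y hy => by
    obtain ⟨a, b, rfl⟩ := mem_span_pair.mp (hspan ▸ hy)
    simp [hw₁, h]
  have h₂₁ : B w₂ w₁ ≠ 0 := fun h => hw₁0 <| hright w₁ hw₁W fun y hy => by
    obtain ⟨a, b, rfl⟩ := mem_span_pair.mp (hspan ▸ hy)
    simp [hw₁, h]
  obtain ⟨t, ht⟩ := exists_apply_add_smul_self_eq_zero hq hσ w₂ w₁ (Or.inl h₁₂)
  obtain ⟨a, b, -, -, hab⟩ := exists_smul_isHyperbolicPair hq hσ hw₁ ht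
    (by simpa [hw₁] using h₁₂) (by simpa [hw₁] using h₂₁)
  exact ⟨_, W.smul_mem a hw₁W, _, W.smul_mem b (W.add_mem hw₂W (W.smul_mem t hw₁W)), hab⟩

theorem IsHyperbolicPair.exists_gram_eq_hyperbolicGram [FiniteDimensional k V] {u₀ u₁ : V}
    (h : IsHyperbolicPair B u₀ u₁) (hq : 1 < q) (hσ : ∀ t, σ t = t ^ q)
    (hV : finrank k V = 4) (hB : B.Nondegenerate) (h₀ : ∀ y, B u₀ y = 0 ↔ B y u₀ = 0)
    (h₁ : ∀ y, B u₁ y = 0 ↔ B y u₁ = 0) :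
    ∃ u : Fin 4 → V, u 0 = u₀ ∧ u 1 = u₁ ∧ ∀ i j, B (u i) (u j) = Matrix.hyperbolicGram k i j := by
  set W := ker (B u₀) ⊓ ker (B u₁)
  have hmem {x : V} : x ∈ W ↔ B u₀ x = 0 ∧ B u₁ x = 0 := by simp [W]
  have hcompl : IsCompl (span k {u₀, u₁}) W := h.isCompl_ker_inf_ker
  have hW : finrank k W = 2 := by
    have := Submodule.finrank_add_eq_of_isCompl hcompl
    rw [h.finrank_span, hV] at this
    omega
  have hspan_le {P : Submodule k V} (hP₀ : u₀ ∈ P) (hP₁ : u₁ ∈ P) (hWP : W ≤ P) : P = ⊤ :=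
    eq_top_iff.mpr (hcompl.codisjoint.eq_top ▸
      sup_le (span_le.mpr (Set.insert_subset hP₀ (Set.singleton_subset_iff.mpr hP₁))) hWP)
  have hleft : ∀ w ∈ W, (∀ y ∈ W, B w y = 0) → w = 0 := by
    intro w hw hwW
    have := hspan_le ((h₀ w).mp (hmem.mp hw).1) ((h₁ w).mp (hmem.mp hw).2)
      fun y hy => mem_ker.mpr (hwW y hy)
    exact hB.1 w fun y => mem_ker.mp (this ▸ mem_top)
  have hright : ∀ w ∈ W, (∀ y ∈ W, B y w = 0) → w = 0 := by
    intro w hw hwW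
    have := hspan_le (P := ker (B.flip w)) (hmem.mp hw).1 (hmem.mp hw).2
      fun y hy => mem_ker.mpr (hwW y hy)
    exact hB.2 w fun y => mem_ker.mp (this ▸ mem_top : y ∈ ker (B.flip w))
  obtain ⟨u₂, hu₂, u₃, hu₃, h'⟩ := exists_isHyperbolicPair_of_finrank_eq_two hq hσ hW hleft hright
  obtain ⟨h₀₂, h₁₂⟩ := hmem.mp hu₂
  obtain ⟨h₀₃, h₁₃⟩ := hmem.mp hu₃
  refine ⟨![u₀, u₁, u₂, u₃], rfl, rfl, fun i j => ?_⟩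
  fin_cases i <;> fin_cases j <;>
    simp [Matrix.hyperbolicGram, h.isotropic_left, h.isotropic_right, h.apply_eq_one,
      h.apply_swap_eq_one, h'.isotropic_left, h'.isotropic_right, h'.apply_eq_one,
      h'.apply_swap_eq_one, h₀₂, h₁₂, h₀₃, h₁₃, (h₀ _).mp h₀₂, (h₁ _).mp h₁₂, (h₀ _).mp h₀₃,
      (h₁ _).mp h₁₃]

end AlgClosed

end LinearMap

section StarChord

open LinearMap Submodule

variable {k : Type*} [Field k] {σ : k →+* k} {B : (Fin 4 → k) →ₛₗ[σ] (Fin 4 → k) →ₗ[k] k}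
  {q : ℕ} {X : Set (Fin 4 → k)} {c : Submodule k (Fin 4 → k)}

theorem IsPoint.exists_eq_span_singleton (hc : IsPoint c) : ∃ v, v ≠ 0 ∧ c = span k {v} := by
  obtain ⟨v, hv, hv0⟩ := c.ne_bot_iff.mp fun h => by subst h; simp [IsPoint] at hc
  refine ⟨v, hv0, (eq_of_le_of_finrank_le ((span_singleton_le_iff_mem v c).mpr hv) ?_).symm⟩
  rw [finrank_span_singleton hv0]
  exact hc.le

theorem IsPoint.sup_eq_of_le {c' ℓ : Submodule k (Fin 4 → k)} (hc : IsPoint c) (hc' : IsPoint c')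
    (hne : c ≠ c') (hℓ : IsLine ℓ) (h : c ≤ ℓ) (h' : c' ≤ ℓ) : c ⊔ c' = ℓ := by
  have hinf : finrank k ↥(c ⊓ c') = 0 := by
    by_contra h0
    have : c ⊓ c' = c := eq_of_le_of_finrank_le inf_le_left (by rw [hc]; omega)
    exact hne (eq_of_le_of_finrank_le (this ▸ inf_le_right) (by rw [hc, hc']))
  have := finrank_sup_add_finrank_inf_eq c c'
  exact eq_of_le_of_finrank_le (sup_le h h') (by rw [hℓ]; unfold IsPoint at hc hc'; omega)

theorem IsStarPoint.isPoint (hc : IsStarPoint q X c) : IsPoint c :=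
  hc.choose_spec.1

theorem IsStarPoint.exists_isLineOn_ne (hq : q ≠ 0) (hc : IsStarPoint q X c) :
    ∃ L₁ L₂, L₁ ≠ L₂ ∧ IsLineOn X L₁ ∧ IsLineOn X L₂ ∧ c ≤ L₁ ⊓ L₂ := by
  obtain ⟨S, -, hcard, hS⟩ := hc
  obtain ⟨L₁, h₁, L₂, h₂, hne⟩ :=
    (Set.one_lt_ncard (Set.finite_of_ncard_ne_zero (s := S) (by omega))).mp (by omega)
  exact ⟨L₁, L₂, hne, (hS L₁ h₁).1, (hS L₂ h₂).1, le_inf (hS L₁ h₁).2 (hS L₂ h₂).2⟩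

theorem IsStarPoint.subset (hq : q ≠ 0) (hc : IsStarPoint q X c) : (c : Set (Fin 4 → k)) ⊆ X := by
  obtain ⟨L₁, L₂, -, ⟨-, hL₁⟩, -, hcL⟩ := hc.exists_isLineOn_ne hq
  exact fun x hx => hL₁ (hcL hx).1

theorem IsStarPoint.apply_eq_zero_iff (hq : q ≠ 0) (hB : B.Nondegenerate)
    (hσ : σ ≠ RingHom.id k) (hc : IsStarPoint q {x | B x x = 0} c) {v : Fin 4 → k} (hv : v ∈ c)
    (y : Fin 4 → k) : B v y = 0 ↔ B y v = 0 := by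
  obtain ⟨L₁, L₂, hne, ⟨h₁, hX₁⟩, ⟨h₂, hX₂⟩, hc⟩ := hc.exists_isLineOn_ne hq
  exact apply_eq_zero_iff_of_mem_inf (finrank_fin_fun k) hB hσ h₁ h₂ hne (fun _ hx => hX₁ hx)
    (fun _ hx => hX₂ hx) (hc hv) y

theorem IsStarChord.exists_isHyperbolicPair [IsAlgClosed k] (hq : 1 < q)
    (hσ : ∀ t, σ t = t ^ q) (hB : B.Nondegenerate) {ℓ : Submodule k (Fin 4 → k)}
    (hℓ : IsStarChord q {x | B x x = 0} ℓ) :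
    ∃ u₀ u₁, IsHyperbolicPair B u₀ u₁ ∧ (∀ y, B u₀ y = 0 ↔ B y u₀ = 0) ∧
      (∀ y, B u₁ y = 0 ↔ B y u₁ = 0) ∧ ℓ = span k {u₀, u₁} := by
  obtain ⟨hℓ, hℓX, c, c', hne, hc, hc', hcℓ, hc'ℓ⟩ := hℓ
  have hq0 : q ≠ 0 := by omega
  have hσ' := RingHom.ne_id_of_forall_eq_pow hq hσ
  have hspan := hc.isPoint.sup_eq_of_le hc'.isPoint hne hℓ hcℓ hc'ℓ
  obtain ⟨v, hv0, rfl⟩ := hc.isPoint.exists_eq_span_singleton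
  obtain ⟨v', hv'0, rfl⟩ := hc'.isPoint.exists_eq_span_singleton
  rw [← span_insert] at hspan
  subst hspan
  have hv := mem_span_singleton_self (R := k) v
  have hv' := mem_span_singleton_self (R := k) v'
  have hvv : B v v = 0 := hc.subset hq0 hv
  have hv'v' : B v' v' = 0 := hc'.subset hq0 hv'
  have hvv' : B v v' ≠ 0 := fun h => hℓX fun x hx => by
    have h' := (hc.apply_eq_zero_iff hq0 hB hσ' hv v').mp h
    obtain ⟨a, b, rfl⟩ := mem_span_pair.mp hx
    simp [hvv, hv'v', h, h']
  have hv'v : B v' v ≠ 0 := fun h => hvv' ((hc.apply_eq_zero_iff hq0 hB hσ' hv v').mpr h)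
  obtain ⟨a, b, ha, hb, hab⟩ := exists_smul_isHyperbolicPair hq hσ hvv hv'v' hvv' hv'v
  refine ⟨a • v, b • v', hab, hc.apply_eq_zero_iff hq0 hB hσ' (smul_mem _ a hv),
    hc'.apply_eq_zero_iff hq0 hB hσ' (smul_mem _ b hv'), ?_⟩
  rw [span_insert, span_insert, span_singleton_smul_eq (isUnit_iff_ne_zero.mpr ha),
    span_singleton_smul_eq (isUnit_iff_ne_zero.mpr hb)]

theorem IsStarChord.exists_gram_eq_hyperbolicGram [IsAlgClosed k] (hq : 1 < q)
    (hσ : ∀ t, σ t = t ^ q) (hB : B.Nondegenerate) {ℓ : Submodule k (Fin 4 → k)}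
    (hℓ : IsStarChord q {x | B x x = 0} ℓ) :
    ∃ u : Fin 4 → Fin 4 → k, (∀ i j, B (u i) (u j) = Matrix.hyperbolicGram k i j) ∧
      ℓ = span k {u 0, u 1} := by
  obtain ⟨u₀, u₁, h, h₀, h₁, rfl⟩ := hℓ.exists_isHyperbolicPair hq hσ hB
  obtain ⟨u, rfl, rfl, hu⟩ := h.exists_gram_eq_hyperbolicGram hq hσ (finrank_fin_fun k) hB h₀ h₁
  exact ⟨u, hu, rfl⟩

end StarChord

theorem extremalCone_eq_setOf_toLinearMapₛₗ₂' {k : Type*} [Field k] (p e : ℕ) [ExpChar k p]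
    (A : Matrix (Fin 4) (Fin 4) k) :
    extremalCone k (p ^ e) A =
      {x | A.toLinearMapₛₗ₂' k (iterateFrobenius k p e) (RingHom.id k) x x = 0} := by
  ext x
  simp only [extremalCone, frobForm, Set.mem_ofPred_eq, Matrix.toLinearMapₛₗ₂'_apply,
    RingHom.id_apply, smul_eq_mul]
  exact Iff.of_eq <| congrArg (· = 0) <| Finset.sum_congr rfl fun i _ =>
    Finset.sum_congr rfl fun j _ => by rw [iterateFrobenius_def]; ring

/-- `Aut(X)` acts transitively on the star chords of a
smooth extremal surface `X` of degree `q+1`: for any two star chords `ℓ`,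
`ℓ'` there is `g ∈ Aut(X)` (represented by an invertible linear map of `k⁴`
preserving the affine cone of `X`) with `g(ℓ) = ℓ'`. -/
theorem aut_transitive_on_star_chords {k : Type*} [Field k] [IsAlgClosed k]
    (p e q : ℕ) (hp : p.Prime) (hchar : CharP k p) (he : 1 ≤ e) (hq : q = p ^ e)
    (A : Matrix (Fin 4) (Fin 4) k) (hA : IsUnit A)
    (ℓ ℓ' : Submodule k (Fin 4 → k))
    (hℓ : IsStarChord q (extremalCone k q A) ℓ)
    (hℓ' : IsStarChord q (extremalCone k q A) ℓ') :
    ∃ g : (Fin 4 → k) ≃ₗ[k] (Fin 4 → k),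
      PreservesCone (extremalCone k q A) g ∧
        Submodule.map (g : (Fin 4 → k) →ₗ[k] (Fin 4 → k)) ℓ = ℓ' := by
  have : Fact p.Prime := ⟨hp⟩
  subst hq
  have hq : 1 < p ^ e := Nat.one_lt_pow (by omega) hp.one_lt
  have hσ (t : k) : iterateFrobenius k p e t = t ^ p ^ e := iterateFrobenius_def ..
  have hB := Matrix.nondegenerate_toLinearMapₛₗ₂' (iterateFrobenius k p e) hA
  rw [extremalCone_eq_setOf_toLinearMapₛₗ₂'] at hℓ hℓ' ⊢
  obtain ⟨u, hu, rfl⟩ := hℓ.exists_gram_eq_hyperbolicGram hq hσ hB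
  obtain ⟨u', hu', rfl⟩ := hℓ'.exists_gram_eq_hyperbolicGram hq hσ hB
  obtain ⟨g, hg, hgu⟩ :=
    LinearMap.exists_linearEquiv_apply_apply_eq (by simp) Matrix.isUnit_hyperbolicGram hu hu'
  refine ⟨g, LinearMap.image_setOf_apply_self_eq_zero g hg, ?_⟩
  rw [Submodule.map_span, Set.image_pair]
  simp [hgu]
end
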